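/- If the dither d is uniformly distributed over the basic cell P₀ of a lattice L in ℝ^L and the quantizer is not overloaded for input x (i.e., Q_L(x + d) always lies in the truncated lattice), then the SDQ error e = Q_L(x + d) − d − x is uniformly distributed over −P₀ (equivalently, over P₀ up to point symmetry), independently of x; in particular E[e] = 0 when P₀ is point-symmetric about the origin. -/

import Mathlib

open MeasureTheory

noncomputable section

/-- The lattice generated by `G`: all integer combinations of the columns of `G`. -/
def latticePts (L : ℕ) (G : Matrix (Fin L) (Fin L) ℝ) : Set (EuclideanSpace ℝ (Fin L)) :=
  {x | ∃ l : Fin L → ℤ, ∀ i, x i = ∑ j, G i j * (l j : ℝ)}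

/-- The basic (Voronoi) cell `P₀` of the lattice: points whose nearest lattice point is `0`. -/
def basicCell (L : ℕ) (G : Matrix (Fin L) (Fin L) ℝ) : Set (EuclideanSpace ℝ (Fin L)) :=
  {x | ∀ z ∈ latticePts L G, ‖x‖ ≤ ‖x - z‖}

/-!
The Voronoi cell `P₀` of a lattice `Λ` is a fundamental domain for the translation action of `Λ`:
its translates cover space, and two of them overlap only inside a perpendicular bisector, a null
set. Let `r` be any measurable map sending each point to a point of `P₀` in its `Λ`-orbit (here
`z ↦ z - Q z`). For every fundamental domain `F`, `r` pushes `vol|F` to `vol|P₀`: up to a null set,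
`r⁻¹ A` is the `Λ`-invariant union of the orbits meeting `A ∩ P₀`, and an invariant set meets all
fundamental domains in the same measure. Taking `F = x + P₀` shows that `x + d mod Λ` is uniform
on `P₀`, and the error `e = -(x + d mod Λ)` is uniform on `-P₀`; its mean vanishes when
`-P₀ = P₀`, since then the law of `e` is invariant under `y ↦ -y`.
-/

open Set Filter
open scoped Pointwise

namespace MeasureTheory

section FundamentalDomain

variable {G α : Type*} [AddGroup G] [AddAction G α] {P : Set α}

theorem eq_zero_of_vadd_mem_of_mem_addFundamentalInterior {x : α} {g : G}
    (hx : x ∈ addFundamentalInterior G P) (hg : g +ᵥ x ∈ P) : g = 0 := by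
  by_contra hg0
  refine (mem_addFundamentalInterior.mp hx).2 (-g) (neg_ne_zero.mpr hg0) ?_
  rw [mem_vadd_set_iff_neg_vadd_mem, neg_neg]
  exact hg

theorem exists_vadd_mem_iff_of_vadd_mem_addFundamentalInterior {B : Set α} (hB : B ⊆ P)
    {x : α} {h : G} (hx : h +ᵥ x ∈ addFundamentalInterior G P) :
    (∃ g : G, g +ᵥ x ∈ B) ↔ h +ᵥ x ∈ B := by
  refine ⟨fun ⟨g, hg⟩ => ?_, fun hxB => ⟨h, hxB⟩⟩
  have hgh : (g + -h) +ᵥ (h +ᵥ x) ∈ P := by rw [add_vadd, neg_vadd_vadd]; exact hB hg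
  rwa [add_neg_eq_zero.mp (eq_zero_of_vadd_mem_of_mem_addFundamentalInterior hx hgh)] at hg

variable [MeasurableSpace α] {μ : Measure α} [Countable G] [VAddInvariantMeasure G α μ] {r : α → α}

namespace IsAddFundamentalDomain

theorem ae_mem_addFundamentalInterior (hP : IsAddFundamentalDomain G P μ)
    (hrP : ∀ x, r x ∈ P) (hr : ∀ x, ∃ g : G, g +ᵥ x = r x) :
    ∀ᵐ x ∂μ, r x ∈ addFundamentalInterior G P := by
  have hnull : μ (⋃ g : G, g +ᵥ addFundamentalFrontier G P) = 0 :=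
    measure_iUnion_null fun g => measure_vadd_null hP.measure_addFundamentalFrontier g
  refine measure_mono_null (fun x hx => ?_) hnull
  obtain ⟨g, hg⟩ := hr x
  have hfr : r x ∈ addFundamentalFrontier G P := by
    rw [← sdiff_addFundamentalInterior]; exact ⟨hrP x, hx⟩
  refine mem_iUnion.mpr ⟨-g, ?_⟩
  rw [mem_vadd_set_iff_neg_vadd_mem, neg_neg, hg]
  exact hfr

variable [MeasurableConstVAdd G α]

theorem map_restrict_eq {F : Set α} (hP : IsAddFundamentalDomain G P μ) (hPm : MeasurableSet P)
    (hF : IsAddFundamentalDomain G F μ) (hrm : Measurable r) (hrP : ∀ x, r x ∈ P)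
    (hr : ∀ x, ∃ g : G, g +ᵥ x = r x) :
    (μ.restrict F).map r = μ.restrict P := by
  ext A hA
  set S : Set α := {x | ∃ g : G, g +ᵥ x ∈ A ∩ P}
  have hSm : MeasurableSet S := by
    have hS : S = ⋃ g : G, (g +ᵥ ·) ⁻¹' (A ∩ P) := by ext; simp [S]
    rw [hS]
    exact .iUnion fun g => measurable_const_vadd g (hA.inter hPm)
  have hS_inv : ∀ g : G, (g +ᵥ ·) ⁻¹' S = S := by
    intro g
    ext x
    refine ⟨fun ⟨g', hg'⟩ => ⟨g' + g, by rwa [add_vadd]⟩, fun ⟨g', hg'⟩ => ⟨g' + -g, ?_⟩⟩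
    show (g' + -g) +ᵥ (g +ᵥ x) ∈ A ∩ P
    rwa [add_vadd, neg_vadd_vadd]
  have hrS : r ⁻¹' A =ᵐ[μ] S := by
    refine eventuallyEq_set.mpr ?_
    filter_upwards [hP.ae_mem_addFundamentalInterior hrP hr] with x hx
    obtain ⟨h, hh⟩ := hr x
    show r x ∈ A ↔ ∃ g : G, g +ᵥ x ∈ A ∩ P
    rw [← hh] at hx ⊢
    rw [exists_vadd_mem_iff_of_vadd_mem_addFundamentalInterior inter_subset_right hx]
    exact (and_iff_left (addFundamentalInterior_subset hx)).symm
  have hSP : (S ∩ P : Set α) =ᵐ[μ] (A ∩ P : Set α) := by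
    refine eventuallyEq_set.mpr ?_
    filter_upwards [measure_eq_zero_iff_ae_notMem.mp hP.measure_addFundamentalFrontier] with x hx
    refine ⟨fun hxSP => ?_, fun hxAP => ⟨⟨0, by rwa [zero_vadd]⟩, hxAP.2⟩⟩
    have hxI : (0 : G) +ᵥ x ∈ addFundamentalInterior G P := by
      rw [zero_vadd, ← sdiff_addFundamentalFrontier]; exact ⟨hxSP.2, hx⟩
    have hxAP := (exists_vadd_mem_iff_of_vadd_mem_addFundamentalInterior inter_subset_right
      hxI).mp hxSP.1
    rwa [zero_vadd] at hxAP
  rw [Measure.map_apply hrm hA, Measure.restrict_apply (hrm hA), Measure.restrict_apply hA]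
  calc μ (r ⁻¹' A ∩ F) = μ (S ∩ F) := measure_congr (ae_eq_set_inter hrS (ae_eq_refl F))
    _ = μ (S ∩ P) := hF.measure_set_eq hP hSm hS_inv
    _ = μ (A ∩ P) := measure_congr hSP

theorem map_restrict_comp_vadd {G' : Type*} [AddGroup G'] [AddAction G' α]
    [MeasurableConstVAdd G' α] [VAddInvariantMeasure G' α μ] [VAddCommClass G' G α]
    (hP : IsAddFundamentalDomain G P μ) (hPm : MeasurableSet P) (hrm : Measurable r)
    (hrP : ∀ x, r x ∈ P) (hr : ∀ x, ∃ g : G, g +ᵥ x = r x) (a : G') :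
    (μ.restrict P).map (fun x => r (a +ᵥ x)) = μ.restrict P := by
  have htrans : (μ.restrict P).map (a +ᵥ ·) = μ.restrict (a +ᵥ P) := by
    have := (measurePreserving_vadd a μ).restrict_preimage_emb
      (measurableEmbedding_const_vadd a) (a +ᵥ P)
    rw [preimage_vadd, neg_vadd_vadd] at this
    exact this.map_eq
  rw [show (fun x => r (a +ᵥ x)) = r ∘ (a +ᵥ ·) from rfl,
    ← Measure.map_map hrm (measurable_const_vadd a), htrans]
  exact map_restrict_eq hP hPm (hP.vadd_of_comm a) hrm hrP hr

end IsAddFundamentalDomain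

end FundamentalDomain

theorem Measure.map_neg_restrict {E : Type*} [MeasurableSpace E] [AddGroup E]
    [MeasurableNeg E] (μ : Measure E) [μ.IsNegInvariant] (s : Set E) :
    (μ.restrict s).map Neg.neg = μ.restrict (Neg.neg ⁻¹' s) := by
  have := (Measure.measurePreserving_neg μ).restrict_preimage_emb
    (MeasurableEquiv.neg E).measurableEmbedding (Neg.neg ⁻¹' s)
  rw [← preimage_comp, neg_comp_neg, preimage_id] at this
  exact this.map_eq

theorem integral_id_eq_zero_of_map_neg_eq {E : Type*} [NormedAddCommGroup E] [NormedSpace ℝ E]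
    [MeasurableSpace E] [BorelSpace E] [SecondCountableTopology E] {ν : Measure E}
    (hν : ν.map Neg.neg = ν) : ∫ y, y ∂ν = 0 := by
  have h : ∫ y, y ∂(ν.map Neg.neg) = ∫ y, -y ∂ν :=
    integral_map measurable_neg.aemeasurable aestronglyMeasurable_id
  rw [hν, integral_neg, eq_neg_iff_add_eq_zero, ← two_smul ℝ] at h
  exact (smul_eq_zero.mp h).resolve_left two_ne_zero

end MeasureTheory

section VoronoiCell

variable {L : ℕ} {G : Matrix (Fin L) (Fin L) ℝ}

def latticeAddSubgroup (L : ℕ) (G : Matrix (Fin L) (Fin L) ℝ) :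
    AddSubgroup (EuclideanSpace ℝ (Fin L)) where
  carrier := latticePts L G
  add_mem' := by
    rintro _ _ ⟨l, hl⟩ ⟨m, hm⟩
    exact ⟨l + m, fun i => by simp [hl, hm, mul_add, Finset.sum_add_distrib]⟩
  zero_mem' := ⟨0, fun i => by simp⟩
  neg_mem' := by
    rintro _ ⟨l, hl⟩
    exact ⟨-l, fun i => by simp [hl]⟩

theorem countable_latticePts : (latticePts L G).Countable :=
  (countable_range fun l : Fin L → ℤ => WithLp.toLp 2 fun i => ∑ j, G i j * (l j : ℝ)).mono
    (by rintro _ ⟨l, hl⟩; exact ⟨l, by ext i; simp [hl]⟩)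

instance : Countable (latticeAddSubgroup L G) := countable_latticePts.to_subtype

theorem isClosed_basicCell : IsClosed (basicCell L G) := by
  simp only [basicCell, ofPred_forall]
  exact isClosed_iInter fun z => isClosed_iInter fun _ =>
    isClosed_le continuous_norm (continuous_id.sub continuous_const).norm

theorem sub_mem_basicCell {y q : EuclideanSpace ℝ (Fin L)} (hq : q ∈ latticePts L G)
    (hnear : ∀ z ∈ latticePts L G, ‖y - q‖ ≤ ‖y - z‖) : y - q ∈ basicCell L G :=
  fun z hz => by simpa [sub_sub] using hnear (q + z) ((latticeAddSubgroup L G).add_mem hq hz)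

theorem isAddFundamentalDomain_basicCell
    (hcover : ∀ y, ∃ q ∈ latticePts L G, y - q ∈ basicCell L G) :
    IsAddFundamentalDomain (latticeAddSubgroup L G) (basicCell L G) := by
  refine .mk'' isClosed_basicCell.measurableSet.nullMeasurableSet (.of_forall fun y => ?_)
    (fun g hg => ?_) fun g => (measurePreserving_vadd g volume).quasiMeasurePreserving
  · obtain ⟨q, hq, hyq⟩ := hcover y
    exact ⟨⟨-q, neg_mem hq⟩, by simpa [neg_add_eq_sub] using hyq⟩
  · refine measure_mono_null (fun u ⟨hgu, hu⟩ => ?_) (Measure.addHaar_affineSubspace volume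
      (AffineSubspace.perpBisector (g : EuclideanSpace ℝ (Fin L)) 0) ?_)
    · rw [mem_vadd_set_iff_neg_vadd_mem] at hgu
      have h1 : ‖u - g‖ ≤ ‖u‖ := by
        simpa [AddSubgroup.vadd_def, neg_add_eq_sub] using hgu (-g) (neg_mem g.2)
      rw [SetLike.mem_coe, AffineSubspace.mem_perpBisector_iff_dist_eq, dist_eq_norm,
        dist_eq_norm, sub_zero]
      exact le_antisymm h1 (hu g g.2)
    · simpa using hg

theorem map_restrict_basicCell_sub_nearest
    (Q : EuclideanSpace ℝ (Fin L) → EuclideanSpace ℝ (Fin L))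
    (hQmem : ∀ y, Q y ∈ latticePts L G)
    (hQnear : ∀ y, ∀ z ∈ latticePts L G, ‖y - Q y‖ ≤ ‖y - z‖) (hQmeas : Measurable Q)
    (x : EuclideanSpace ℝ (Fin L)) :
    (volume.restrict (basicCell L G)).map (fun y => x + y - Q (x + y))
      = volume.restrict (basicCell L G) := by
  have hres : ∀ y, y - Q y ∈ basicCell L G := fun y => sub_mem_basicCell (hQmem y) (hQnear y)
  exact (isAddFundamentalDomain_basicCell fun y => ⟨Q y, hQmem y, hres y⟩).map_restrict_comp_vadd
    isClosed_basicCell.measurableSet (measurable_id.sub hQmeas) hres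
    (fun y => ⟨⟨-Q y, neg_mem (hQmem y)⟩, neg_add_eq_sub _ _⟩) x

end VoronoiCell

theorem sdq_error_uniform_general
    {Ω : Type*} [MeasurableSpace Ω] (μ : Measure Ω)
    (L : ℕ) (G : Matrix (Fin L) (Fin L) ℝ)
    (Q : EuclideanSpace ℝ (Fin L) → EuclideanSpace ℝ (Fin L))
    (hQmem : ∀ y, Q y ∈ latticePts L G)
    (hQnear : ∀ y, ∀ z ∈ latticePts L G, ‖y - Q y‖ ≤ ‖y - z‖)
    (hQmeas : Measurable Q)
    (hsym : ∀ y, y ∈ basicCell L G ↔ -y ∈ basicCell L G)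
    (d : Ω → EuclideanSpace ℝ (Fin L)) (hdmeas : Measurable d)
    (hlaw : Measure.map d μ
      = (volume (basicCell L G))⁻¹ • volume.restrict (basicCell L G))
    (x : EuclideanSpace ℝ (Fin L)) :
    Measure.map (fun ω => Q (x + d ω) - d ω - x) μ
        = (volume (basicCell L G))⁻¹
            • volume.restrict {y : EuclideanSpace ℝ (Fin L) | -y ∈ basicCell L G}
      ∧ ∫ ω, (Q (x + d ω) - d ω - x) ∂μ = 0 := by
  set P := basicCell L G
  set residue := fun y => x + y - Q (x + y)
  have hresm : Measurable residue :=
    (measurable_const.add measurable_id).sub (hQmeas.comp (measurable_const.add measurable_id))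
  have herr : (fun ω => Q (x + d ω) - d ω - x) = Neg.neg ∘ residue ∘ d := by
    ext1 ω; simp only [Function.comp_apply, residue]; abel
  have herr_meas : Measurable (fun ω => Q (x + d ω) - d ω - x) :=
    herr ▸ measurable_neg.comp (hresm.comp hdmeas)
  have hlaw_err : Measure.map (fun ω => Q (x + d ω) - d ω - x) μ
      = (volume P)⁻¹ • volume.restrict {y | -y ∈ P} := by
    rw [herr, ← Measure.map_map measurable_neg (hresm.comp hdmeas), ← Measure.map_map hresm hdmeas,
      hlaw, Measure.map_smul, map_restrict_basicCell_sub_nearest Q hQmem hQnear hQmeas,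
      Measure.map_smul, Measure.map_neg_restrict]
    rfl
  refine ⟨hlaw_err, ?_⟩
  have hPneg : {y | -y ∈ P} = P := by ext y; exact (hsym y).symm
  have hmean : ∫ ω, (Q (x + d ω) - d ω - x) ∂μ
      = ∫ y, y ∂(Measure.map (fun ω => Q (x + d ω) - d ω - x) μ) :=
    (integral_map herr_meas.aemeasurable aestronglyMeasurable_id).symm
  rw [hmean, hlaw_err, hPneg]
  refine integral_id_eq_zero_of_map_neg_eq ?_
  rw [Measure.map_smul, Measure.map_neg_restrict]
  exact congrArg _ (congrArg _ hPneg)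

/-- Crypto-lemma / dithered quantization (Theorem 1, error distribution): if the dither
`d` is uniform over the basic cell `P₀` and the quantizer is not overloaded for input
`x`, then the SDQ error `e = Q(x + d) − d − x` is uniformly distributed over `−P₀`,
independently of `x`; in particular `E[e] = 0` when `P₀` is point-symmetric. -/
theorem sdq_error_uniform
    {Ω : Type*} [MeasurableSpace Ω] (μ : Measure Ω) [IsProbabilityMeasure μ]
    (L : ℕ) (hL : 0 < L) (G : Matrix (Fin L) (Fin L) ℝ) (hG : IsUnit G.det)
    (Q : EuclideanSpace ℝ (Fin L) → EuclideanSpace ℝ (Fin L))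
    (hQmem : ∀ y, Q y ∈ latticePts L G)
    (hQnear : ∀ y, ∀ z ∈ latticePts L G, ‖y - Q y‖ ≤ ‖y - z‖)
    (hQmeas : Measurable Q)
    (hsym : ∀ y, y ∈ basicCell L G ↔ -y ∈ basicCell L G)
    (hnull : volume (frontier (basicCell L G)) = 0)
    (d : Ω → EuclideanSpace ℝ (Fin L)) (hdmeas : Measurable d)
    (hlaw : Measure.map d μ
      = (volume (basicCell L G))⁻¹ • volume.restrict (basicCell L G))
    (x : EuclideanSpace ℝ (Fin L)) (γ : ℝ) (hγ : 0 < γ)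
    (hno_overload : ∀ ω, ‖Q (x + d ω)‖ ≤ γ) :
    Measure.map (fun ω => Q (x + d ω) - d ω - x) μ
        = (volume (basicCell L G))⁻¹
            • volume.restrict {y : EuclideanSpace ℝ (Fin L) | -y ∈ basicCell L G}
      ∧ ∫ ω, (Q (x + d ω) - d ω - x) ∂μ = 0 :=
  sdq_error_uniform_general μ L G Q hQmem hQnear hQmeas hsym d hdmeas hlaw x
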